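/- For n = 3 the k = 1 Ruijsenaars-type sum expressed in terms of g is invariant under the addition of a constant: for any function g : ℂ → ℂ, any constant A ∈ ℂ, and any x₁, x₂, x₃ ∈ ℝ, one has T[g + A](x₁,x₂,x₃) = T[g](x₁,x₂,x₃), where T[g](x₁,x₂,x₃) = ∑_{i=1}^{3} ( ∏_{j ≠ i} g(x_i − x_j) − ∏_{j ≠ i} g(x_j − x_i) ). -/
import Mathlib


/-- The `k = 1`, `n = 3` Ruijsenaars sum written in terms of `g`:
`T[g](x₁,x₂,x₃) = ∑_{i=1}^{3} ( ∏_{j ≠ i} g(x_i − x_j) − ∏_{j ≠ i} g(x_j − x_i) )`. -/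
noncomputable def T3g (g : ℂ → ℂ) (x₁ x₂ x₃ : ℝ) : ℂ :=
  (g ((x₁ : ℂ) - (x₂ : ℂ)) * g ((x₁ : ℂ) - (x₃ : ℂ)) -
    g ((x₂ : ℂ) - (x₁ : ℂ)) * g ((x₃ : ℂ) - (x₁ : ℂ))) +
  (g ((x₂ : ℂ) - (x₁ : ℂ)) * g ((x₂ : ℂ) - (x₃ : ℂ)) -
    g ((x₁ : ℂ) - (x₂ : ℂ)) * g ((x₃ : ℂ) - (x₂ : ℂ))) +
  (g ((x₃ : ℂ) - (x₁ : ℂ)) * g ((x₃ : ℂ) - (x₂ : ℂ)) -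
    g ((x₁ : ℂ) - (x₃ : ℂ)) * g ((x₂ : ℂ) - (x₃ : ℂ)))

/-- For `n = 3`, `k = 1`, the Ruijsenaars-type sum in terms of `g` is invariant
under addition of a constant: `T[g + A] = T[g]`. -/
theorem T3g_add_const (g : ℂ → ℂ) (A : ℂ) (x₁ x₂ x₃ : ℝ) :
    T3g (fun z => g z + A) x₁ x₂ x₃ = T3g g x₁ x₂ x₃ := by
  simp only [T3g]; ring
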